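/- arXiv:2508.18596 — 3 statements merged into one kernel-verified Lean document; each statement's English description precedes it below -/
import Mathlib

section
/- Let E be a finite-dimensional real inner product space, S ⊆ E a nonempty set, and (x_k)_{k≥1} a sequence in E that is Fejér monotone with respect to S, i.e., ‖x_{k+1} − p‖ ≤ ‖x_k − p‖ for all k ≥ 1 and all p ∈ S. If every cluster point of (x_k) lies in S, then (x_k) converges, and its limit lies in S. -/
open Filter Topology

/-- A Fejér monotone sequence (w.r.t. a nonempty set S) in a finite-dimensional real
inner product space, all of whose cluster points lie in S, converges to a point of S. -/
theorem fejer_monotone_converges {E : Type*} [NormedAddCommGroup E]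
    [InnerProductSpace ℝ E] [FiniteDimensional ℝ E]
    (S : Set E) (hS : S.Nonempty) (x : ℕ → E)
    (hfejer : ∀ k ≥ 1, ∀ p ∈ S, ‖x (k + 1) - p‖ ≤ ‖x k - p‖)
    (hcluster : ∀ y : E, MapClusterPt y Filter.atTop x → y ∈ S) :
    ∃ l ∈ S, Filter.Tendsto x Filter.atTop (nhds l) := by
  obtain ⟨p, hp⟩ := hS
  -- the sequence is bounded
  have hmono : ∀ n, ‖x (n + 1) - p‖ ≤ ‖x 1 - p‖ := by
    intro n
    induction n with
    | zero => exact le_refl _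
    | succ m ih => exact le_trans (hfejer (m + 1) (Nat.le_add_left 1 m) p hp) ih
  set R : ℝ := max ‖x 0 - p‖ ‖x 1 - p‖ with hR
  have hball : ∀ n, x n ∈ Metric.closedBall p R := by
    intro n
    rw [Metric.mem_closedBall, dist_eq_norm]
    cases n with
    | zero => exact le_max_left _ _
    | succ m => exact le_trans (hmono m) (le_max_right _ _)
  obtain ⟨y, -, φ, hφ, hyt⟩ :=
    tendsto_subseq_of_bounded Metric.isBounded_closedBall hball
  have hyS : y ∈ S := hcluster y (MapClusterPt.of_comp hφ.tendsto_atTop hyt.mapClusterPt)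
  refine ⟨y, hyS, ?_⟩
  -- the distance to y converges (antitone from index 1, bounded below)
  set b : ℕ → ℝ := fun k => ‖x (k + 1) - y‖ with hb
  have hanti : Antitone b := antitone_nat_of_succ_le fun k =>
    hfejer (k + 1) (Nat.le_add_left 1 k) y hyS
  have hbdd : BddBelow (Set.range b) :=
    ⟨0, fun r ⟨k, hk⟩ => hk ▸ norm_nonneg _⟩
  have hbL : Tendsto b atTop (𝓝 (⨅ k, b k)) := tendsto_atTop_ciInf hanti hbdd
  set L : ℝ := ⨅ k, b k
  have haL : Tendsto (fun k => ‖x k - y‖) atTop (𝓝 L) :=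
    (tendsto_add_atTop_iff_nat 1).mp hbL
  -- subsequence of norms tends to 0
  have h0 : Tendsto (fun k => ‖x (φ k) - y‖) atTop (𝓝 0) := by
    simpa [tendsto_iff_norm_sub_tendsto_zero] using hyt
  have hL0 : L = 0 :=
    tendsto_nhds_unique (haL.comp hφ.tendsto_atTop) h0
  rw [tendsto_iff_norm_sub_tendsto_zero]
  simpa [hL0] using haL
end

section
/- (Krasnosel'skiĭ–Mann convergence) Let E be a finite-dimensional real inner product space, Ω ⊆ E a nonempty convex compact set, T : Ω → Ω nonexpansive, θ ∈ (0,1), and x₁ ∈ Ω. Then the KM iterates x_{k+1} = (1−θ)x_k + θT(x_k) all lie in Ω and the sequence (x_k) converges to a point x* ∈ Ω with T(x*) = x*. -/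
lemma nonexp_fixed_point {E : Type*} [NormedAddCommGroup E] [InnerProductSpace ℝ E]
    (Ω : Set E) (hne : Ω.Nonempty) (hconv : Convex ℝ Ω) (hcomp : IsCompact Ω)
    (T : E → E) (hmaps : Set.MapsTo T Ω Ω)
    (hnonexp : ∀ x ∈ Ω, ∀ y ∈ Ω, ‖T x - T y‖ ≤ ‖x - y‖) :
    ∃ p ∈ Ω, T p = p := by
  obtain ⟨c, hc⟩ := hne
  have hcompl : CompactSpace Ω := isCompact_iff_compactSpace.mp hcomp
  have hnel : Nonempty Ω := ⟨⟨c, hc⟩⟩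
  -- bound
  obtain ⟨M, hM⟩ := hcomp.isBounded.subset_ball 0
  -- for each n, a contraction
  have key : ∀ n : ℕ, ∃ z ∈ Ω, z = (1/(n+2) : ℝ) • c + ((1:ℝ) - 1/(n+2)) • T z := by
    intro n
    set ε : ℝ := 1/(n+2) with hε
    have hε0 : 0 < ε := by positivity
    have hε1 : ε < 1 := by
      rw [hε, div_lt_one (by positivity)]
      linarith [Nat.cast_nonneg (α := ℝ) n]
    set g : Ω → Ω := fun z => ⟨ε • c + (1-ε) • T z,
      hconv hc (hmaps z.2) hε0.le (by linarith) (by ring)⟩ with hg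
    have hK : (⟨1-ε, by linarith⟩ : NNReal) < 1 := by
      change 1 - ε < (1:ℝ); linarith
    have hcontr : ContractingWith ⟨1-ε, by linarith⟩ g := by
      constructor
      · exact hK
      · intro z w
        have : dist (g z) (g w) = (1-ε) * dist (T z) (T w) := by
          simp only [Subtype.dist_eq, hg, dist_eq_norm]
          rw [show ε • c + (1-ε) • T (z:E) - (ε • c + (1-ε) • T (w:E))
              = (1-ε) • (T (z:E) - T (w:E)) by module, norm_smul]
          rw [Real.norm_eq_abs, abs_of_nonneg (by linarith)]
        rw [edist_dist, edist_dist, this]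
        erw [← ENNReal.ofReal_coe_nnreal]
        rw [← ENNReal.ofReal_mul (by exact (show (0:ℝ) ≤ 1 - ε by linarith))]
        apply ENNReal.ofReal_le_ofReal
        push_cast
        apply mul_le_mul_of_nonneg_left _ (by linarith)
        rw [Subtype.dist_eq, dist_eq_norm, dist_eq_norm]
        exact hnonexp _ z.2 _ w.2
    set z := ContractingWith.fixedPoint g hcontr with hzd
    have hz : g z = z := hcontr.fixedPoint_isFixedPt
    refine ⟨(z : E), z.2, ?_⟩
    have := congrArg (Subtype.val) hz
    simpa [hg] using this.symm
  choose z hzΩ hzeq using key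
  obtain ⟨p, hpΩ, φ, hφ, hlim⟩ := hcomp.tendsto_subseq hzΩ
  refine ⟨p, hpΩ, ?_⟩
  -- T z n - z n tends to 0 along φ
  have hεlim : Filter.Tendsto (fun n : ℕ => (1/(n+2) : ℝ)) Filter.atTop (nhds 0) := by
    have h := (tendsto_one_div_atTop_nhds_zero_nat (𝕜 := ℝ)).comp (Filter.tendsto_add_atTop_nat 2)
    refine h.congr fun n => ?_
    simp [Function.comp]
  have hbd : ∀ n, ‖T (z n) - z n‖ ≤ (1/(n+2) : ℝ) * (2 * M) := by
    intro n
    have h1 : T (z n) - z n = (1/(n+2) : ℝ) • (T (z n) - c) := by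
      nth_rewrite 2 [hzeq n]
      module
    rw [h1, norm_smul, Real.norm_eq_abs, abs_of_nonneg (by positivity)]
    apply mul_le_mul_of_nonneg_left _ (by positivity)
    have hb1 := hM (hmaps (hzΩ n))
    have hb2 := hM hc
    simp only [Metric.mem_ball, dist_zero_right] at hb1 hb2
    calc ‖T (z n) - c‖ ≤ ‖T (z n)‖ + ‖c‖ := norm_sub_le _ _
      _ ≤ 2 * M := by linarith
  have hdiff : Filter.Tendsto (fun n => T (z n) - z n) Filter.atTop (nhds 0) := by
    rw [tendsto_zero_iff_norm_tendsto_zero]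
    refine squeeze_zero (fun n => norm_nonneg _) hbd ?_
    simpa using hεlim.mul_const (2*M)
  have hTz : Filter.Tendsto (fun j => T (z (φ j))) Filter.atTop (nhds p) := by
    have := (hdiff.comp hφ.tendsto_atTop).add hlim
    simpa [Function.comp] using this
  have hTz' : Filter.Tendsto (fun j => T (z (φ j))) Filter.atTop (nhds (T p)) := by
    rw [tendsto_iff_dist_tendsto_zero]
    refine squeeze_zero (fun j => dist_nonneg) (g := fun j => dist (z (φ j)) p) ?_ ?_
    · intro j
      simpa [dist_eq_norm] using hnonexp _ (hzΩ (φ j)) _ hpΩ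
    · exact tendsto_iff_dist_tendsto_zero.mp hlim
  exact tendsto_nhds_unique hTz' hTz

open RealInnerProductSpace in
lemma combo_norm_sq {E : Type*} [NormedAddCommGroup E] [InnerProductSpace ℝ E]
    (θ : ℝ) (a b : E) :
    ‖(1-θ)•a + θ•b‖^2 = (1-θ)*‖a‖^2 + θ*‖b‖^2 - θ*(1-θ)*‖a-b‖^2 := by
  have e : ∀ v : E, ‖v‖^2 = ⟪v,v⟫ := fun v => (real_inner_self_eq_norm_sq v).symm
  rw [e, e, e, e]
  simp only [inner_add_left, inner_add_right, inner_sub_left, inner_sub_right,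
    real_inner_smul_left, real_inner_smul_right, real_inner_comm a b]
  ring

/-- Krasnosel'skiĭ–Mann convergence: for a nonexpansive self-map T of a nonempty convex
compact set Ω in a finite-dimensional real inner product space and θ ∈ (0,1), the KM
iterates stay in Ω and converge to a fixed point of T in Ω. -/
theorem km_convergence {E : Type*} [NormedAddCommGroup E]
    [InnerProductSpace ℝ E] [FiniteDimensional ℝ E]
    (Ω : Set E) (hne : Ω.Nonempty) (hconv : Convex ℝ Ω) (hcomp : IsCompact Ω)
    (T : E → E) (hmaps : Set.MapsTo T Ω Ω)
    (hnonexp : ∀ x ∈ Ω, ∀ y ∈ Ω, ‖T x - T y‖ ≤ ‖x - y‖)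
    (θ : ℝ) (hθ : θ ∈ Set.Ioo (0 : ℝ) 1)
    (x : ℕ → E) (hx1 : x 1 ∈ Ω)
    (hiter : ∀ k ≥ 1, x (k + 1) = (1 - θ) • x k + θ • T (x k)) :
    (∀ k ≥ 1, x k ∈ Ω) ∧
    ∃ p ∈ Ω, T p = p ∧ Filter.Tendsto x Filter.atTop (nhds p) := by
  obtain ⟨hθ0, hθ1⟩ := hθ
  have hmem : ∀ k, x (k+1) ∈ Ω := by
    intro k
    induction k with
    | zero => exact hx1
    | succ n ih =>
      rw [hiter (n+1) (by omega)]
      exact hconv ih (hmaps ih) (by linarith) hθ0.le (by ring)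
  have hmem' : ∀ k ≥ 1, x k ∈ Ω := by
    intro k hk
    obtain ⟨m, rfl⟩ := Nat.exists_eq_add_of_le hk
    simpa [Nat.add_comm] using hmem m
  refine ⟨hmem', ?_⟩
  -- Fejér monotonicity with respect to any fixed point
  have fejer : ∀ q ∈ Ω, T q = q → ∀ k : ℕ,
      ‖x (k+1+1) - q‖^2 ≤ ‖x (k+1) - q‖^2 - θ*(1-θ)*‖x (k+1) - T (x (k+1))‖^2 := by
    intro q hq hTq k
    have h1 : x (k+1+1) - q = (1-θ) • (x (k+1) - q) + θ • (T (x (k+1)) - T q) := by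
      rw [hiter (k+1) (by omega), hTq]; module
    rw [h1, combo_norm_sq]
    have h2 : ‖T (x (k+1)) - T q‖ ≤ ‖x (k+1) - q‖ := hnonexp _ (hmem k) _ hq
    have h3 : ‖T (x (k+1)) - T q‖^2 ≤ ‖x (k+1) - q‖^2 :=
      pow_le_pow_left₀ (norm_nonneg _) h2 2
    have h4 : (x (k+1) - q) - (T (x (k+1)) - T q) = x (k+1) - T (x (k+1)) := by
      rw [hTq]; abel
    rw [h4]
    nlinarith [norm_nonneg (x (k+1) - T (x (k+1))), sq_nonneg ‖x (k+1) - T (x (k+1))‖]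
  -- asymptotic regularity using a fixed point p
  obtain ⟨p, hpΩ, hTp⟩ := nonexp_fixed_point Ω hne hconv hcomp T hmaps hnonexp
  set D : ℕ → ℝ := fun k => ‖x (k+1) - p‖^2 with hD
  have hDanti : Antitone D := by
    apply antitone_nat_of_succ_le
    intro k
    have := fejer p hpΩ hTp k
    have hnn : 0 ≤ θ*(1-θ)*‖x (k+1) - T (x (k+1))‖^2 :=
      mul_nonneg (mul_nonneg hθ0.le (by linarith)) (sq_nonneg _)
    simp only [hD]
    linarith
  have hDbdd : BddBelow (Set.range D) := by
    refine ⟨0, ?_⟩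
    rintro _ ⟨k, rfl⟩
    positivity
  have hDlim : Filter.Tendsto D Filter.atTop (nhds (⨅ k, D k)) :=
    tendsto_atTop_ciInf hDanti hDbdd
  have hgap : Filter.Tendsto (fun k => D k - D (k+1)) Filter.atTop (nhds 0) := by
    have := hDlim.sub ((Filter.tendsto_add_atTop_iff_nat 1).mpr hDlim)
    simpa using this
  have hvsq : Filter.Tendsto (fun k => ‖x (k+1) - T (x (k+1))‖^2) Filter.atTop (nhds 0) := by
    have hpos : (0:ℝ) < θ*(1-θ) := by nlinarith
    refine squeeze_zero (g := fun k => (θ*(1-θ))⁻¹ * (D k - D (k+1)))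
      (fun k => sq_nonneg _) (fun k => ?_)
      (by simpa using hgap.const_mul (θ*(1-θ))⁻¹)
    rw [le_inv_mul_iff₀ hpos]
    have := fejer p hpΩ hTp k
    simp only [hD]
    linarith
  have hv : Filter.Tendsto (fun k => x (k+1) - T (x (k+1))) Filter.atTop (nhds 0) := by
    rw [tendsto_zero_iff_norm_tendsto_zero]
    have : Filter.Tendsto (fun k => Real.sqrt (‖x (k+1) - T (x (k+1))‖^2))
        Filter.atTop (nhds (Real.sqrt 0)) :=
      (Real.continuous_sqrt.tendsto 0).comp hvsq
    simpa [Real.sqrt_sq (norm_nonneg _)] using this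
  -- compact: convergent subsequence
  obtain ⟨q, hqΩ, φ, hφ, hlim⟩ := hcomp.tendsto_subseq (x := fun k => x (k+1)) hmem
  have hTq : T q = q := by
    have hTsub : Filter.Tendsto (fun j => T (x (φ j + 1))) Filter.atTop (nhds q) := by
      have := hlim.sub (hv.comp hφ.tendsto_atTop)
      simp only [Function.comp, sub_zero] at this ⊢
      refine this.congr fun j => ?_
      abel
    have hTsub' : Filter.Tendsto (fun j => T (x (φ j + 1))) Filter.atTop (nhds (T q)) := by
      rw [tendsto_iff_dist_tendsto_zero]
      refine squeeze_zero (fun j => dist_nonneg) (g := fun j => dist (x (φ j + 1)) q)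
        (fun j => ?_) (tendsto_iff_dist_tendsto_zero.mp hlim)
      simpa [dist_eq_norm] using hnonexp _ (hmem (φ j)) _ hqΩ
    exact tendsto_nhds_unique hTsub' hTsub
  refine ⟨q, hqΩ, hTq, ?_⟩
  -- norm distances to q are antitone and a subsequence tends to 0
  set e : ℕ → ℝ := fun k => ‖x (k+1) - q‖ with he
  have heanti : Antitone e := by
    apply antitone_nat_of_succ_le
    intro k
    have h := fejer q hqΩ hTq k
    have hnn : 0 ≤ θ*(1-θ)*‖x (k+1) - T (x (k+1))‖^2 :=
      mul_nonneg (mul_nonneg hθ0.le (by linarith)) (sq_nonneg _)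
    have : ‖x (k+1+1) - q‖^2 ≤ ‖x (k+1) - q‖^2 := by linarith
    exact (pow_le_pow_iff_left₀ (norm_nonneg _) (norm_nonneg _) two_ne_zero).mp this
  have hebdd : BddBelow (Set.range e) := ⟨0, by rintro _ ⟨k, rfl⟩; positivity⟩
  have helim : Filter.Tendsto e Filter.atTop (nhds (⨅ k, e k)) :=
    tendsto_atTop_ciInf heanti hebdd
  have hesub : Filter.Tendsto (fun j => e (φ j)) Filter.atTop (nhds 0) := by
    have := (hlim.sub (tendsto_const_nhds (x := q))).norm
    simpa [he] using this
  have hesub' : Filter.Tendsto (fun j => e (φ j)) Filter.atTop (nhds (⨅ k, e k)) :=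
    helim.comp hφ.tendsto_atTop
  have hinf0 : (⨅ k, e k) = 0 := tendsto_nhds_unique hesub' hesub
  have hxq : Filter.Tendsto (fun k => x (k+1)) Filter.atTop (nhds q) := by
    rw [tendsto_iff_norm_sub_tendsto_zero]
    rw [hinf0] at helim
    exact helim
  exact (Filter.tendsto_add_atTop_iff_nat 1).mp hxq
end

section
/- (Scalar descent property) Fix σ ≥ 0, η ≥ 0, β > 0 and θ ∈ (0,1). Let γ(λ) = c(S_{βη}(λ + βσ)) and F(x) = η|x| − σx. Then for every λ ∈ [−1, 1], the updated value λ⁺ = (1−θ)λ + θγ(λ) satisfies F(λ⁺) ≤ F(λ). -/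
/-- Projection of a real number onto the interval [-1, 1]. -/
noncomputable def clamp (x : ℝ) : ℝ := max (-1) (min x 1)

/-- Soft-thresholding: S_t(x) = sign(x)·max(|x| − t, 0). -/
noncomputable def softThreshold (t x : ℝ) : ℝ := Real.sign x * max (|x| - t) 0

lemma softThreshold_eq (t u : ℝ) (ht : 0 ≤ t) :
    softThreshold t u = if 0 ≤ u then max (u - t) 0 else min (u + t) 0 := by
  unfold softThreshold
  rcases lt_trichotomy u 0 with h | h | h
  · rw [if_neg (not_le.mpr h), Real.sign_of_neg h, abs_of_neg h]
    rw [min_comm, ← neg_neg (min 0 (u + t)), ← max_neg_neg]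
    ring_nf
    rw [max_comm]
  · subst h; simp [ht]
  · rw [if_pos h.le, Real.sign_of_pos h, abs_of_pos h, one_mul]

lemma clamp_le (x : ℝ) (hx : -1 ≤ x) : clamp x ≤ x := by
  unfold clamp
  exact max_le hx (min_le_left _ _)

lemma le_clamp (x : ℝ) (hx : x ≤ 1) : x ≤ clamp x := by
  unfold clamp
  exact le_trans (le_min le_rfl hx) (le_max_right _ _)

lemma clamp_mem (x : ℝ) : -1 ≤ clamp x ∧ clamp x ≤ 1 := by
  unfold clamp
  refine ⟨le_max_left _ _, max_le (by norm_num) (min_le_right _ _)⟩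

/-- Scalar descent property: with γ(λ) = c(S_{βη}(λ + βσ)) and F(x) = η|x| − σx,
the update λ⁺ = (1−θ)λ + θγ(λ) satisfies F(λ⁺) ≤ F(λ) for λ ∈ [−1,1]. -/
theorem scalar_descent (σ η β θ : ℝ)
    (hσ : 0 ≤ σ) (hη : 0 ≤ η) (hβ : 0 < β) (hθ : θ ∈ Set.Ioo (0 : ℝ) 1)
    (lam : ℝ) (hlam : lam ∈ Set.Icc (-1 : ℝ) 1) :
    η * |(1 - θ) * lam + θ * clamp (softThreshold (β * η) (lam + β * σ))| -
        σ * ((1 - θ) * lam + θ * clamp (softThreshold (β * η) (lam + β * σ))) ≤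
      η * |lam| - σ * lam := by
  obtain ⟨hθ0, hθ1⟩ := hθ
  obtain ⟨hl1, hl2⟩ := hlam
  have htβη : 0 ≤ β * η := mul_nonneg hβ.le hη
  set u := lam + β * σ with hu
  set s := softThreshold (β * η) u with hs
  have hseq : s = if 0 ≤ u then max (u - β * η) 0 else min (u + β * η) 0 :=
    softThreshold_eq _ _ htβη
  set g := clamp s with hg
  have hgmem := clamp_mem s
  set p := (1 - θ) * lam + θ * g with hp
  rcases le_or_gt η σ with hησ | hησ
  · -- σ ≥ η : g ≥ lam, p ≥ lam, use |p| ≤ |lam| + (p - lam)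
    have hlg : lam ≤ g := by
      have hls : lam ≤ s := by
        rw [hseq]
        split_ifs with h
        · have : lam ≤ u - β * η := by
            rw [hu]; nlinarith
          exact le_trans this (le_max_left _ _)
        · have h1 : lam ≤ u + β * η := by rw [hu]; nlinarith
          have h2 : lam ≤ (0:ℝ) := le_of_lt (by nlinarith [not_le.mp h])
          exact le_min h1 h2
      show lam ≤ max (-1) (min s 1)
      exact le_trans (le_min hls hl2) (le_max_right _ _)
    have hlp : lam ≤ p := by rw [hp]; nlinarith
    have habs : |p| ≤ |lam| + (p - lam) := by
      have := abs_sub_abs_le_abs_sub p lam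
      rw [abs_of_nonneg (by linarith : 0 ≤ p - lam)] at this
      linarith
    nlinarith [abs_nonneg p, abs_nonneg lam]
  · -- σ < η
    rcases le_or_gt 0 lam with hl0 | hl0
    · -- 0 ≤ g ≤ lam, so 0 ≤ p ≤ lam
      have hu0 : 0 ≤ u := by rw [hu]; nlinarith
      have hs0 : 0 ≤ s := by rw [hseq, if_pos hu0]; exact le_max_right _ _
      have hsl : s ≤ lam := by
        rw [hseq, if_pos hu0]
        have : u - β * η ≤ lam := by rw [hu]; nlinarith
        exact max_le this hl0
      have hg0 : 0 ≤ g := by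
        show (0:ℝ) ≤ max (-1) (min s 1)
        exact le_trans (le_min hs0 (by norm_num)) (le_max_right _ _)
      have hgl : g ≤ lam := le_trans (clamp_le s (by linarith)) hsl
      have hp0 : 0 ≤ p := by rw [hp]; nlinarith
      have hpl : p ≤ lam := by rw [hp]; nlinarith
      rw [abs_of_nonneg hp0, abs_of_nonneg hl0]
      nlinarith
    · -- lam < 0 : lam ≤ g ≤ 0, so lam ≤ p ≤ 0
      have hls : lam ≤ s ∧ s ≤ 0 := by
        rw [hseq]
        split_ifs with h
        · constructor
          · exact le_trans hl0.le (le_max_right _ _)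
          · have : u - β * η ≤ 0 := by rw [hu]; nlinarith
            exact max_le this le_rfl
        · constructor
          · have h1 : lam ≤ u + β * η := by rw [hu]; nlinarith
            exact le_min h1 hl0.le
          · exact min_le_right _ _
      have hlg : lam ≤ g := by
        show lam ≤ max (-1) (min s 1)
        exact le_trans (le_min hls.1 hl2) (le_max_right _ _)
      have hg0 : g ≤ 0 := le_trans (clamp_le s (by linarith)) hls.2
      have hp0 : p ≤ 0 := by rw [hp]; nlinarith
      have hpl : lam ≤ p := by rw [hp]; nlinarith
      rw [abs_of_nonpos hp0, abs_of_nonpos hl0.le]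
      nlinarith
end
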